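/- For every integer k ≥ 1, the commutator subgroup [H_k, H_k] of H_k is contained in the centre of G_k and has exponent dividing 2 (every element of [H_k, H_k] squares to the identity). -/

import Mathlib

/-!
Let `K` be the subgroup of central elements of `G_k` whose square is `1`. The relations put
`[y_0, y_i]` in `K` for `1 ≤ i ≤ 2^(k-1)`, so in `G_k / K` the element `y` commutes with `y_i`
for these `i`. Since `x^(2^k)` commutes with `y`, the index of `y_i` only matters modulo `2^k`;
conjugating by powers of `x` and swapping the two factors then shows that all the `y_i` commute
in `G_k / K`. They generate a subgroup normalized by `x` and by `y`, so the image of `H_k` in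
`G_k / K` is abelian, i.e. `[H_k, H_k] ≤ K`.
-/

open Subgroup

namespace P2G

/-- The commutator `[a,b] = a⁻¹ b⁻¹ a b` (left-normed convention of the paper). -/
def comm {M : Type*} [Group M] (a b : M) : M := a⁻¹ * b⁻¹ * a * b

def X : FreeGroup (Fin 2) := FreeGroup.of 0
def Y : FreeGroup (Fin 2) := FreeGroup.of 1

/-- `y_j = x^(-j) y x^j` in the free group. -/
def yF (j : ℤ) : FreeGroup (Fin 2) := X ^ (-j) * Y * X ^ j

/-- Relations for `G_k`:
`x^(2^(k+1)) = y^4 = [x^(2^k), y] = [y^2, x] = 1` and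
`[y_0,y_i]^2 = [y_0,y_i,x] = [y_0,y_i,y] = 1` for `1 ≤ i ≤ 2^(k-1)`. -/
def rels (k : ℕ) : Set (FreeGroup (Fin 2)) :=
  {X ^ 2 ^ (k + 1), Y ^ 4, comm (X ^ 2 ^ k) Y, comm (Y ^ 2) X} ∪
    ⋃ i ∈ Set.Icc 1 (2 ^ (k - 1)),
      {comm (yF 0) (yF i) ^ 2, comm (comm (yF 0) (yF i)) X, comm (comm (yF 0) (yF i)) Y}

/-- The group `G_k`, given by the above presentation. -/
abbrev G (k : ℕ) := PresentedGroup (rels k)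

/-- The generator `x` of `G_k`. -/
def x (k : ℕ) : G k := PresentedGroup.of 0

/-- The generator `y` of `G_k`. -/
def y (k : ℕ) : G k := PresentedGroup.of 1

/-- `y_j = x^(-j) y x^j` in `G_k`. -/
def yg (k : ℕ) (j : ℤ) : G k := x k ^ (-j) * y k * x k ^ j

/-- `H_k`, the normal closure of `y` in `G_k`. -/
def Hsub (k : ℕ) : Subgroup (G k) := Subgroup.normalClosure {y k}

/-- `Z_k`, the normal closure in `G_k` of `{x^(2^k), y^2} ∪ {[y_0,y_i] : 1 ≤ i ≤ 2^(k-1)}`. -/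
def Zsub (k : ℕ) : Subgroup (G k) :=
  Subgroup.normalClosure ({x k ^ 2 ^ k, y k ^ 2} ∪
    {g | ∃ i : ℕ, 1 ≤ i ∧ i ≤ 2 ^ (k - 1) ∧ g = comm (yg k 0) (yg k i)})

/-- `G_k^(2^j)`, the subgroup generated by all `2^j`-th powers of elements of `G_k`. -/
def pow2 (k j : ℕ) : Subgroup (G k) := Subgroup.closure (Set.range fun g : G k => g ^ 2 ^ j)

/-- `w = y_(2^k − 1) y_(2^k − 2) ⋯ y_1 y_0` in `G_k`. -/
def w (k : ℕ) : G k := (((List.range (2 ^ k)).reverse).map fun j => yg k j).prod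

/-- The left-normed commutator `c k i = [y, x, …(i copies of x)…, x]`; `c k 0 = y`. -/
def c (k : ℕ) : ℕ → G k
  | 0 => y k
  | i + 1 => comm (c k i) (x k)

/-- `γ_m(G_k)`, the `m`-th term of the lower central series (`γ_1 = G_k`). -/
abbrev gamma (k m : ℕ) : Subgroup (G k) := Subgroup.lowerCentralSeries (⊤ : Subgroup (G k)) (m - 1)

end P2G

section ConjZPow

variable {Q : Type*} [Group Q] (a b : Q)

def conjZPow (i : ℤ) : Q := a ^ (-i) * b * a ^ i

@[simp]
theorem conjZPow_zero : conjZPow a b 0 = b := by simp [conjZPow]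

theorem conjZPow_add (i j : ℤ) :
    conjZPow a b (i + j) = (a ^ j)⁻¹ * conjZPow a b i * a ^ j := by
  simp only [conjZPow, neg_add, zpow_add, zpow_neg]
  group

theorem conjZPow_sub_one (i : ℤ) : conjZPow a b (i - 1) = a * conjZPow a b i * a⁻¹ := by
  rw [sub_eq_add_neg, conjZPow_add]
  group

variable {a b}

theorem conjZPow_add_mul_of_commute {n : ℕ} (h : Commute (a ^ n) b) (i q : ℤ) :
    conjZPow a b (i + n * q) = conjZPow a b i := by
  have hq : conjZPow a b (n * q) = b := by
    have : Commute (a ^ ((n : ℤ) * q)) b := by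
      rw [zpow_mul, zpow_natCast]
      exact h.zpow_left q
    rw [conjZPow, zpow_neg, mul_assoc, ← this.eq, inv_mul_cancel_left]
  rw [add_comm, conjZPow_add, hq, conjZPow, zpow_neg]

theorem commute_conjZPow_iff (i j : ℤ) :
    Commute (conjZPow a b i) (conjZPow a b j) ↔ Commute b (conjZPow a b (j - i)) := by
  conv_lhs => rw [← zero_add i, ← sub_add_cancel j i, conjZPow_add, conjZPow_add]
  simpa only [conjZPow_zero, inv_inv] using Commute.conj_iff (a ^ i)⁻¹

theorem commute_conjZPow_neg_iff (d : ℤ) :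
    Commute b (conjZPow a b (-d)) ↔ Commute b (conjZPow a b d) := by
  rw [← zero_sub, ← commute_conjZPow_iff, conjZPow_zero, Commute.symm_iff]

/-- The difference of two indices reduces modulo `n` to some `r ∈ [0, n)`, and `r` or `n - r`
is at most `n / 2`. -/
theorem commute_conjZPow_of_commute_pow {n : ℕ} (hn : 0 < n) (hper : Commute (a ^ n) b)
    (hnear : ∀ i : ℕ, 1 ≤ i → i ≤ n / 2 → Commute b (conjZPow a b i)) (i j : ℤ) :
    Commute (conjZPow a b i) (conjZPow a b j) := by
  have hres : ∀ r : ℕ, r < n → Commute b (conjZPow a b r) := by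
    intro r hr
    rcases Nat.eq_zero_or_pos r with rfl | hr0
    · simp
    rcases le_or_gt r (n / 2) with hle | hgt
    · exact hnear r hr0 hle
    have hsymm := hnear (n - r) (by omega) (by omega)
    rw [← commute_conjZPow_neg_iff, ← conjZPow_add_mul_of_commute hper _ 1] at hsymm
    convert hsymm using 3
    push_cast [Nat.cast_sub hr.le]
    ring
  have hn' : (0 : ℤ) < n := by exact_mod_cast hn
  rw [commute_conjZPow_iff, ← Int.emod_add_mul_ediv (j - i) n, conjZPow_add_mul_of_commute hper]
  have hlt := Int.emod_lt_of_pos (j - i) hn'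
  lift (j - i) % n to ℕ using Int.emod_nonneg _ hn'.ne' with r
  exact hres r (by omega)

theorem normalClosure_le_closure_range_conjZPow (hgen : closure {a, b} = ⊤) :
    normalClosure {b} ≤ closure (Set.range (conjZPow a b)) := by
  have hb : b ∈ closure (Set.range (conjZPow a b)) := subset_closure ⟨0, conjZPow_zero a b⟩
  have hnormal : (closure (Set.range (conjZPow a b))).Normal := by
    rw [← normalizer_eq_top_iff, eq_top_iff, ← hgen, closure_le, Set.insert_subset_iff,
      Set.singleton_subset_iff]
    refine ⟨normalizer_le_normalizer_closure _ ?_, le_normalizer hb⟩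
    rw [mem_normalizer_iff_conj_image_eq, ← Set.range_comp]
    convert (Equiv.subRight (1 : ℤ)).surjective.range_comp (conjZPow a b) using 2
    ext i
    simp [conjZPow_sub_one]
  exact normalClosure_le_normal (Set.singleton_subset_iff.mpr hb)

theorem commutator_normalClosure_eq_bot_of_commute_conjZPow (hgen : closure {a, b} = ⊤)
    (hcomm : ∀ i j, Commute (conjZPow a b i) (conjZPow a b j)) :
    ⁅normalClosure {b}, normalClosure {b}⁆ = ⊥ := by
  have hab : IsMulCommutative (closure (Set.range (conjZPow a b))) :=
    isMulCommutative_closure (by rintro _ ⟨i, rfl⟩ _ ⟨j, rfl⟩; exact hcomm i j)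
  refine eq_bot_mono (commutator_mono (normalClosure_le_closure_range_conjZPow hgen)
    (normalClosure_le_closure_range_conjZPow hgen)) ?_
  rw [commutator_eq_bot_iff_le_centralizer]
  exact le_centralizer_iff_isMulCommutative.mpr hab

end ConjZPow

section CenterTwoTorsion

variable (M : Type*) [Group M]

def centerTwoTorsion : Subgroup M where
  carrier := {g | g ∈ center M ∧ g ^ 2 = 1}
  one_mem' := ⟨one_mem _, one_pow 2⟩
  mul_mem' := by
    rintro a b ⟨ha, ha2⟩ ⟨hb, hb2⟩
    refine ⟨mul_mem ha hb, ?_⟩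
    have hab : Commute a b := (mem_center_iff.mp ha b).symm
    rw [hab.mul_pow, ha2, hb2, one_mul]
  inv_mem' := by
    rintro a ⟨ha, ha2⟩
    exact ⟨inv_mem ha, by rw [inv_pow, ha2, inv_one]⟩

instance centerTwoTorsion.normal : (centerTwoTorsion M).Normal :=
  ⟨fun n hn g => by rw [mem_center_iff.mp hn.1 g, mul_inv_cancel_right]; exact hn⟩

variable {M}

theorem mem_center_of_forall_commute {s : Set M} (hs : closure s = ⊤) {g : M}
    (h : ∀ a ∈ s, Commute a g) : g ∈ center M := by
  rw [← centralizer_univ, ← coe_top, ← hs, centralizer_closure]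
  exact h

end CenterTwoTorsion

namespace P2G

theorem comm_eq_one_iff {M : Type*} [Group M] {a b : M} : comm a b = 1 ↔ Commute a b := by
  rw [show comm a b = (b * a)⁻¹ * (a * b) by simp only [comm]; group, inv_mul_eq_one]
  exact eq_comm

theorem map_comm {M N : Type*} [Group M] [Group N] (f : M →* N) (a b : M) :
    f (comm a b) = comm (f a) (f b) := by
  simp [comm]

variable {k : ℕ}

theorem mk_yF (j : ℤ) : PresentedGroup.mk (rels k) (yF j) = yg k j := by
  simp only [yF, yg, map_mul, map_zpow]
  rfl

theorem closure_x_y : closure {x k, y k} = ⊤ := by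
  rw [← PresentedGroup.closure_range_of (rels k)]
  congr
  ext
  simp [Fin.exists_fin_two, x, y, eq_comm]

theorem commute_x_pow_y : Commute (x k ^ 2 ^ k) (y k) := by
  have h := PresentedGroup.one_of_mem (rels := rels k) (x := comm (X ^ 2 ^ k) Y) (by simp [rels])
  rwa [map_comm, map_pow, comm_eq_one_iff] at h

theorem comm_yg_zero_mem_centerTwoTorsion {i : ℕ} (h1 : 1 ≤ i) (h2 : i ≤ 2 ^ (k - 1)) :
    comm (yg k 0) (yg k i) ∈ centerTwoTorsion (G k) := by
  have hrel : ∀ r ∈ ({comm (yF 0) (yF i) ^ 2, comm (comm (yF 0) (yF i)) X,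
      comm (comm (yF 0) (yF i)) Y} : Set (FreeGroup (Fin 2))),
      PresentedGroup.mk (rels k) r = 1 :=
    fun r hr => PresentedGroup.one_of_mem <| Set.mem_union_right _ <|
      Set.mem_biUnion (x := (i : ℤ)) ⟨by exact_mod_cast h1, by exact_mod_cast h2⟩ hr
  simp only [Set.mem_insert_iff, Set.mem_singleton_iff, forall_eq_or_imp, forall_eq, map_pow,
    map_comm, mk_yF] at hrel
  obtain ⟨hsq, hx, hy⟩ := hrel
  refine ⟨mem_center_of_forall_commute closure_x_y ?_, hsq⟩
  simp only [Set.mem_insert_iff, Set.mem_singleton_iff, forall_eq_or_imp, forall_eq]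
  exact ⟨(comm_eq_one_iff.mp hx).symm, (comm_eq_one_iff.mp hy).symm⟩

theorem stmt2_general (k : ℕ) :
    ⁅Hsub k, Hsub k⁆ ≤ Subgroup.center (G k) ∧
    ∀ g ∈ ⁅Hsub k, Hsub k⁆, g ^ 2 = 1 := by
  let π := QuotientGroup.mk' (centerTwoTorsion (G k))
  have hπ (j : ℤ) : π (yg k j) = conjZPow (π (x k)) (π (y k)) j := by simp [yg, conjZPow]
  have hgen : closure {π (x k), π (y k)} = ⊤ := by
    rw [← Set.image_pair, ← MonoidHom.map_closure, closure_x_y, ← MonoidHom.range_eq_map,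
      MonoidHom.range_eq_top]
    exact QuotientGroup.mk'_surjective _
  have hnear (i : ℕ) (h1 : 1 ≤ i) (h2 : i ≤ 2 ^ k / 2) :
      Commute (π (y k)) (conjZPow (π (x k)) (π (y k)) i) := by
    have hi : i ≤ 2 ^ (k - 1) := h2.trans <| Nat.div_le_of_le_mul <| by
      rw [← pow_succ']
      exact Nat.pow_le_pow_right two_pos (by omega)
    have h : π (comm (yg k 0) (yg k i)) = 1 :=
      (QuotientGroup.eq_one_iff _).mpr (comm_yg_zero_mem_centerTwoTorsion h1 hi)
    rwa [map_comm, hπ, hπ, conjZPow_zero, comm_eq_one_iff] at h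
  have hcomm := commute_conjZPow_of_commute_pow (Nat.two_pow_pos k) (commute_x_pow_y.map π) hnear
  have hbot : map π ⁅Hsub k, Hsub k⁆ = ⊥ := by
    rw [map_commutator, Hsub, map_normalClosure _ _ (QuotientGroup.mk'_surjective _),
      Set.image_singleton]
    exact commutator_normalClosure_eq_bot_of_commute_conjZPow hgen hcomm
  rw [Subgroup.map_eq_bot_iff, QuotientGroup.ker_mk'] at hbot
  exact ⟨fun g hg => (hbot hg).1, fun g hg => (hbot hg).2⟩

/-- For every `k ≥ 1`, the commutator subgroup `[H_k, H_k]` is contained in the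
centre of `G_k` and has exponent dividing `2`. -/
theorem stmt2 (k : ℕ) (hk : 1 ≤ k) :
    ⁅Hsub k, Hsub k⁆ ≤ Subgroup.center (G k) ∧
    ∀ g ∈ ⁅Hsub k, Hsub k⁆, g ^ 2 = 1 :=
  stmt2_general k

end P2G
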